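/- arXiv:1606.03898 — 3 statements merged into one kernel-verified Lean document; each statement's English description precedes it below -/
import Mathlib

section
/- Let N be a network on a finite set V with |V| ≥ 2. Then the flow relation 𝔉(N) = {(x,y) ∈ A : φ_{xy} ≥ φ_{yx}} ∪ {(x,x) : x ∈ V} is complete and quasi-transitive. -/
/-- A flow from `s` to `t` in the network with capacity `c`: bounded by the
capacity on every arc and conserving flow at every vertex other than `s`, `t`. -/
def IsFlow {V : Type*} [Fintype V] [DecidableEq V]
    (c : V → V → ℕ) (s t : V) (f : V → V → ℕ) : Prop :=
  (∀ x y : V, x ≠ y → f x y ≤ c x y) ∧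
  ∀ x : V, x ≠ s → x ≠ t →
    ∑ y ∈ Finset.univ.erase x, f x y = ∑ y ∈ Finset.univ.erase x, f y x

/-- The value of a flow `f` from `s`: outflow of `s` minus inflow of `s`. -/
def flowValue {V : Type*} [Fintype V] [DecidableEq V]
    (f : V → V → ℕ) (s : V) : ℤ :=
  (∑ y ∈ Finset.univ.erase s, (f s y : ℤ)) -
    ∑ y ∈ Finset.univ.erase s, (f y s : ℤ)

/-- The maximum flow value `φ_{st}` from `s` to `t` in the network `c`. -/
noncomputable def maxFlow {V : Type*} [Fintype V] [DecidableEq V]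
    (c : V → V → ℕ) (s t : V) : ℕ :=
  sSup {n : ℕ | ∃ f : V → V → ℕ, IsFlow c s t f ∧ flowValue f s = (n : ℤ)}

/-- The flow relation `𝔉(N)`: `x ⪰ y` iff `x = y` or `x ≠ y` and `φ_{xy} ≥ φ_{yx}`. -/
def FlowRel {V : Type*} [Fintype V] [DecidableEq V]
    (c : V → V → ℕ) (x y : V) : Prop :=
  x = y ∨ (x ≠ y ∧ maxFlow c y x ≤ maxFlow c x y)

/-- A relation is complete if any two elements are comparable. -/
def CompleteRel {V : Type*} (R : V → V → Prop) : Prop :=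
  ∀ x y : V, R x y ∨ R y x

/-- The strict part `S(R)` of a relation `R`. -/
def StrictPart {V : Type*} (R : V → V → Prop) (x y : V) : Prop :=
  R x y ∧ ¬ R y x

/-- A relation is quasi-transitive if its strict part is transitive. -/
def QuasiTransitive {V : Type*} (R : V → V → Prop) : Prop :=
  Transitive (StrictPart R)

/-- The outdegree of `x` in the network `c`. -/
def outdeg {V : Type*} [Fintype V] [DecidableEq V] (c : V → V → ℕ) (x : V) : ℕ :=
  ∑ y ∈ Finset.univ.erase x, c x y

/-- The indegree of `x` in the network `c`. -/
def indeg {V : Type*} [Fintype V] [DecidableEq V] (c : V → V → ℕ) (x : V) : ℕ :=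
  ∑ y ∈ Finset.univ.erase x, c y x

/-!
Quasi-transitivity rests on the Gomory–Hu inequality `min φ_xy φ_yz ≤ φ_xz` for `x ≠ z`:
a minimum `x`–`z` cut contains `y` or not, so it is also a `y`–`z` or an `x`–`y` cut and bounds
`φ_yz` or `φ_xy`. Minimum cuts exist by the Ford–Fulkerson argument: the vertices reachable
from `s` in the residual network of a maximum flow form a cut saturated by that flow, since a
residual path to `t` would carry one more unit. If `φ_yx < φ_xy` and `φ_zy < φ_yz`, the
inequality for the three triangles `(x,y,z)`, `(z,x,y)`, `(y,z,x)` forces `φ_zx < φ_xz`.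
-/

open Finset Relation

lemma Relation.ReflTransGen.exists_head_avoiding {α : Type*} {r : α → α → Prop} {a b : α}
    (h : ReflTransGen r a b) (hab : a ≠ b) :
    ∃ w, r a w ∧ ReflTransGen (fun x y => r x y ∧ x ≠ a ∧ y ≠ a) w b := by
  induction h with
  | refl => exact absurd rfl hab
  | @tail b' d _ hstep ih =>
    by_cases hb' : b' = a
    · subst hb'
      exact ⟨d, hstep, .refl⟩
    · obtain ⟨w, haw, hw⟩ := ih (Ne.symm hb')
      exact ⟨w, haw, hw.tail ⟨hstep, hb', Ne.symm hab⟩⟩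

section Network

variable {V : Type*} [Fintype V] [DecidableEq V]

def WithinCapacity (c f : V → V → ℕ) : Prop :=
  ∀ x y, x ≠ y → f x y ≤ c x y

def cutCapacity (c : V → V → ℕ) (S : Finset V) : ℕ :=
  ∑ a ∈ S, ∑ b ∈ Sᶜ, c a b

def Residual (c f : V → V → ℕ) (a b : V) : Prop :=
  a ≠ b ∧ (f a b < c a b ∨ 0 < f b a)

variable {c : V → V → ℕ}

lemma flowValue_eq_sum (f : V → V → ℕ) (v : V) :
    flowValue f v = ∑ y, ((f v y : ℤ) - f y v) := by
  rw [flowValue, ← sum_sub_distrib, sum_erase _ (sub_self _)]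

lemma flowValue_eq_zero_iff (f : V → V → ℕ) (x : V) :
    flowValue f x = 0 ↔ ∑ y ∈ univ.erase x, f x y = ∑ y ∈ univ.erase x, f y x := by
  rw [flowValue, sub_eq_zero, ← Nat.cast_sum, ← Nat.cast_sum, Nat.cast_inj]

lemma isFlow_iff {s t : V} {f : V → V → ℕ} :
    IsFlow c s t f ↔ WithinCapacity c f ∧ ∀ x, x ≠ s → x ≠ t → flowValue f x = 0 := by
  simp only [IsFlow, WithinCapacity, flowValue_eq_zero_iff]

lemma sum_flowValue_eq_sum_cut (f : V → V → ℕ) (S : Finset V) :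
    ∑ a ∈ S, flowValue f a = ∑ a ∈ S, ∑ b ∈ Sᶜ, ((f a b : ℤ) - f b a) := by
  have hinner : ∑ a ∈ S, ∑ b ∈ S, ((f a b : ℤ) - f b a) = 0 := by
    simp only [sum_sub_distrib]
    rw [sum_comm, sub_self]
  simp only [flowValue_eq_sum, ← sum_add_sum_compl S, sum_add_distrib, hinner, zero_add]

lemma IsFlow.flowValue_eq_sum_cut {s t : V} {f : V → V → ℕ} (hf : IsFlow c s t f)
    {S : Finset V} (hs : s ∈ S) (ht : t ∉ S) :
    flowValue f s = ∑ a ∈ S, ∑ b ∈ Sᶜ, ((f a b : ℤ) - f b a) := by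
  rw [← sum_flowValue_eq_sum_cut, sum_eq_single_of_mem s hs]
  intro x hx hxs
  exact (isFlow_iff.1 hf).2 x hxs (ne_of_mem_of_not_mem hx ht)

lemma IsFlow.flowValue_le_cutCapacity {s t : V} {f : V → V → ℕ} (hf : IsFlow c s t f)
    {S : Finset V} (hs : s ∈ S) (ht : t ∉ S) : flowValue f s ≤ cutCapacity c S := by
  rw [hf.flowValue_eq_sum_cut hs ht, cutCapacity, Nat.cast_sum]
  refine sum_le_sum fun a ha => ?_
  rw [Nat.cast_sum]
  refine sum_le_sum fun b hb => ?_
  have hab : a ≠ b := ne_of_mem_of_not_mem ha (mem_compl.1 hb)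
  have := hf.1 a b hab
  omega

variable (c) in
lemma isFlow_zero (s t : V) : IsFlow c s t (fun _ _ => 0) :=
  isFlow_iff.2 ⟨fun _ _ _ => Nat.zero_le _, fun _ _ _ => by simp [flowValue]⟩

variable (c) in
lemma bddAbove_flowValues {s t : V} (hst : s ≠ t) :
    BddAbove {n : ℕ | ∃ f, IsFlow c s t f ∧ flowValue f s = n} := by
  refine ⟨cutCapacity c {s}, ?_⟩
  rintro n ⟨f, hf, hn⟩
  exact_mod_cast hn ▸ hf.flowValue_le_cutCapacity (mem_singleton_self s) (by simpa using hst.symm)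

variable (c) in
lemma exists_isFlow_flowValue_eq_maxFlow {s t : V} (hst : s ≠ t) :
    ∃ f, IsFlow c s t f ∧ flowValue f s = maxFlow c s t :=
  Nat.sSup_mem (s := {n : ℕ | ∃ f, IsFlow c s t f ∧ flowValue f s = n})
    ⟨0, fun _ _ => 0, isFlow_zero c s t, by simp [flowValue]⟩ (bddAbove_flowValues c hst)

lemma IsFlow.le_maxFlow {s t : V} {f : V → V → ℕ} (hf : IsFlow c s t f) (hst : s ≠ t)
    {n : ℕ} (hn : flowValue f s = n) : n ≤ maxFlow c s t :=
  le_csSup (bddAbove_flowValues c hst) ⟨f, hf, hn⟩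

lemma maxFlow_le_cutCapacity {s t : V} {S : Finset V} (hs : s ∈ S) (ht : t ∉ S) :
    maxFlow c s t ≤ cutCapacity c S := by
  obtain ⟨f, hf, hval⟩ := exists_isFlow_flowValue_eq_maxFlow c (ne_of_mem_of_not_mem hs ht)
  exact_mod_cast hval ▸ hf.flowValue_le_cutCapacity hs ht

lemma sum_arc_sub (u w v : V) :
    ∑ y, ((if v = u ∧ y = w then 1 else 0 : ℤ) - if y = u ∧ v = w then 1 else 0)
      = (if v = u then 1 else 0) - if v = w then 1 else 0 := by
  simp [ite_and, sum_sub_distrib]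

lemma flowValue_eq_add_of_cast_eq {f g : V → V → ℕ} {d : V → V → ℤ}
    (hd : ∀ a b, (g a b : ℤ) = f a b + d a b) (v : V) :
    flowValue g v = flowValue f v + ∑ y, (d v y - d y v) := by
  rw [flowValue_eq_sum, flowValue_eq_sum, ← sum_add_distrib]
  exact sum_congr rfl fun y _ => by rw [hd, hd]; ring

lemma WithinCapacity.exists_push {f : V → V → ℕ} (hf : WithinCapacity c f) {u w : V}
    (huw : Residual c f u w) :
    ∃ g, WithinCapacity c g ∧
      (∀ v, flowValue g v = flowValue f v + (if v = u then 1 else 0) - if v = w then 1 else 0) ∧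
      ∀ a b, a ≠ u → b ≠ u → g a b = f a b := by
  obtain ⟨-, hfwd | hbwd⟩ := huw
  · refine ⟨fun a b => f a b + if a = u ∧ b = w then 1 else 0, ?_, fun v => ?_, ?_⟩
    · intro a b hab
      by_cases h : a = u ∧ b = w
      · obtain ⟨rfl, rfl⟩ := h
        simpa using hfwd
      · simpa [h] using hf a b hab
    · rw [flowValue_eq_add_of_cast_eq (d := fun a b => if a = u ∧ b = w then 1 else 0)
        (fun a b => by push_cast; rfl), sum_arc_sub, add_sub_assoc]
    · intro a b ha _
      simp [ha]
  · refine ⟨fun a b => f a b - if a = w ∧ b = u then 1 else 0, ?_, fun v => ?_, ?_⟩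
    · exact fun a b hab => (Nat.sub_le _ _).trans (hf a b hab)
    · have hd : ∀ a b, ((f a b - if a = w ∧ b = u then 1 else 0 : ℕ) : ℤ)
          = f a b + -(if a = w ∧ b = u then 1 else 0) := by
        intro a b
        by_cases h : a = w ∧ b = u
        · obtain ⟨rfl, rfl⟩ := h
          simp only [and_self, if_true]
          omega
        · simp [h]
      rw [flowValue_eq_add_of_cast_eq hd]
      have := sum_arc_sub w u v
      simp only [neg_sub_neg, sum_sub_distrib] at this ⊢
      linarith
    · intro a b _ hb
      simp [hb]

lemma WithinCapacity.exists_augment {t : V} (T : Finset V) :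
    ∀ {f : V → V → ℕ} {u : V}, WithinCapacity c f →
      ReflTransGen (fun a b => Residual c f a b ∧ a ∈ T ∧ b ∈ T) u t →
      ∃ g, WithinCapacity c g ∧
        ∀ v, flowValue g v = flowValue f v + (if v = u then 1 else 0) - if v = t then 1 else 0 := by
  induction T using Finset.strongInduction with
  | H T ih =>
    intro f u hf hpath
    by_cases hut : u = t
    · exact ⟨f, hf, fun v => by rw [hut]; ring⟩
    -- Push along the first arc `u → w` of a path whose remainder avoids `u`: the remainder
    -- is still residual afterwards, and lives in the smaller vertex set `T.erase u`.
    obtain ⟨w, ⟨huw, huT, -⟩, hrest⟩ := hpath.exists_head_avoiding hut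
    obtain ⟨g, hg, hgval, hgf⟩ := hf.exists_push huw
    have hrest' :
        ReflTransGen (fun a b => Residual c g a b ∧ a ∈ T.erase u ∧ b ∈ T.erase u) w t := by
      refine ReflTransGen.mono (fun a b ⟨⟨⟨hab, hres⟩, haT, hbT⟩, hau, hbu⟩ => ?_) _ _ hrest
      refine ⟨⟨hab, ?_⟩, mem_erase.2 ⟨hau, haT⟩, mem_erase.2 ⟨hbu, hbT⟩⟩
      rwa [hgf a b hau hbu, hgf b a hbu hau]
    obtain ⟨g', hg', hg'val⟩ := ih _ (erase_ssubset huT) hg hrest'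
    exact ⟨g', hg', fun v => by rw [hg'val, hgval]; ring⟩

lemma IsFlow.not_reflTransGen_residual {s t : V} {f : V → V → ℕ} (hf : IsFlow c s t f)
    (hst : s ≠ t) (hmax : flowValue f s = maxFlow c s t) : ¬ ReflTransGen (Residual c f) s t := by
  intro hpath
  obtain ⟨hcap, hcons⟩ := isFlow_iff.1 hf
  obtain ⟨g, hg, hgval⟩ := hcap.exists_augment univ
    (ReflTransGen.mono (fun a b h => ⟨h, mem_univ a, mem_univ b⟩) _ _ hpath)
  have hgflow : IsFlow c s t g :=
    isFlow_iff.2 ⟨hg, fun x hxs hxt => by simp [hgval, hcons x hxs hxt, hxs, hxt]⟩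
  have := hgflow.le_maxFlow hst (n := maxFlow c s t + 1) (by simp [hgval, hmax, hst])
  omega

lemma IsFlow.flowValue_eq_cutCapacity {s t : V} {f : V → V → ℕ} (hf : IsFlow c s t f)
    {S : Finset V} (hs : s ∈ S) (ht : t ∉ S) (hS : ∀ a ∈ S, ∀ b ∉ S, ¬ Residual c f a b) :
    flowValue f s = cutCapacity c S := by
  rw [hf.flowValue_eq_sum_cut hs ht, cutCapacity, Nat.cast_sum]
  refine sum_congr rfl fun a ha => ?_
  rw [Nat.cast_sum]
  refine sum_congr rfl fun b hb => ?_
  have hb : b ∉ S := mem_compl.1 hb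
  have hab : a ≠ b := ne_of_mem_of_not_mem ha hb
  have hsat := hS a ha b hb
  simp only [Residual, not_and, not_or, not_lt, nonpos_iff_eq_zero] at hsat
  obtain ⟨hfull, hzero⟩ := hsat hab
  have := hf.1 a b hab
  rw [hzero, le_antisymm this hfull]
  simp

variable (c) in
lemma exists_cutCapacity_le_maxFlow {s t : V} (hst : s ≠ t) :
    ∃ S : Finset V, s ∈ S ∧ t ∉ S ∧ cutCapacity c S ≤ maxFlow c s t := by
  classical
  obtain ⟨f, hf, hmax⟩ := exists_isFlow_flowValue_eq_maxFlow c hst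
  set S := univ.filter (ReflTransGen (Residual c f) s)
  have hs : s ∈ S := mem_filter.2 ⟨mem_univ s, ReflTransGen.refl⟩
  have ht : t ∉ S := fun ht => hf.not_reflTransGen_residual hst hmax (mem_filter.1 ht).2
  have hS : ∀ a ∈ S, ∀ b ∉ S, ¬ Residual c f a b := fun a ha b hb hab =>
    hb (mem_filter.2 ⟨mem_univ b, (mem_filter.1 ha).2.tail hab⟩)
  refine ⟨S, hs, ht, le_of_eq ?_⟩
  exact_mod_cast (hf.flowValue_eq_cutCapacity hs ht hS).symm.trans hmax

variable (c) in
lemma min_maxFlow_le_maxFlow {x z : V} (hxz : x ≠ z) (y : V) :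
    min (maxFlow c x y) (maxFlow c y z) ≤ maxFlow c x z := by
  obtain ⟨S, hx, hz, hS⟩ := exists_cutCapacity_le_maxFlow c hxz
  by_cases hy : y ∈ S
  · exact (min_le_right _ _).trans ((maxFlow_le_cutCapacity hy hz).trans hS)
  · exact (min_le_left _ _).trans ((maxFlow_le_cutCapacity hx hy).trans hS)

variable (c) in
lemma strictPart_flowRel_iff (x y : V) :
    StrictPart (FlowRel c) x y ↔ x ≠ y ∧ maxFlow c y x < maxFlow c x y := by
  unfold StrictPart FlowRel
  constructor
  · rintro ⟨rfl | ⟨hxy, -⟩, h⟩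
    · exact absurd (Or.inl rfl) h
    · exact ⟨hxy, lt_of_not_ge fun hle => h (Or.inr ⟨hxy.symm, hle⟩)⟩
  · rintro ⟨hxy, hlt⟩
    refine ⟨Or.inr ⟨hxy, hlt.le⟩, ?_⟩
    rintro (h | ⟨-, hle⟩)
    · exact hxy h.symm
    · exact hle.not_gt hlt

end Network

theorem stmt2_general {V : Type*} [Fintype V] [DecidableEq V]
    (c : V → V → ℕ) :
    CompleteRel (FlowRel c) ∧ QuasiTransitive (FlowRel c) := by
  refine ⟨fun x y => ?_, fun x y z hxy hyz => ?_⟩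
  · by_cases hxy : x = y
    · exact Or.inl (Or.inl hxy)
    rcases le_total (maxFlow c y x) (maxFlow c x y) with h | h
    · exact Or.inl (Or.inr ⟨hxy, h⟩)
    · exact Or.inr (Or.inr ⟨Ne.symm hxy, h⟩)
  · rw [strictPart_flowRel_iff] at hxy hyz ⊢
    obtain ⟨hxy, hxy_lt⟩ := hxy
    obtain ⟨hyz, hyz_lt⟩ := hyz
    have hxz : x ≠ z := by
      rintro rfl
      exact lt_asymm hxy_lt hyz_lt
    have hxyz := min_maxFlow_le_maxFlow c hxz y
    have hzxy := min_maxFlow_le_maxFlow c hyz.symm x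
    have hyzx := min_maxFlow_le_maxFlow c hxy.symm z
    exact ⟨hxz, by omega⟩

/-- The flow relation `𝔉(N)` of any network is complete and quasi-transitive. -/
theorem stmt2 {V : Type*} [Fintype V] [DecidableEq V]
    (hV : 2 ≤ Fintype.card V) (c : V → V → ℕ) :
    CompleteRel (FlowRel c) ∧ QuasiTransitive (FlowRel c) :=
  stmt2_general c
end

section
/- Let V be a finite set with |V| ≥ 2, A = V² ∖ {(x,x) : x ∈ V}, and let R be a relation on V. Then R is complete and quasi-transitive if and only if there exists θ : A → ℝ satisfying the Gomory–Hu condition such that R = R(θ) = {(x,y) ∈ A : θ(x,y) ≥ θ(y,x)} ∪ {(x,x) : x ∈ V}. -/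
/-- A linear order relation: complete, transitive and antisymmetric. -/
def IsLinearRel {V : Type*} (L : V → V → Prop) : Prop :=
  CompleteRel L ∧ Transitive L ∧ ∀ x y : V, L x y → L y x → x = y

/-- A relation `P` is acyclic if for every sequence of `m ≥ 2` distinct elements
whose consecutive pairs are related by `P`, the last element is not related to
the first one. -/
def AcyclicRel {V : Type*} (P : V → V → Prop) : Prop :=
  ∀ (x y : V) (l : List V), (x :: (l ++ [y])).Nodup →
    List.Chain' P (x :: (l ++ [y])) → ¬ P y x

/-- The set `𝐋_⋄(R)` of linear refinements of `R`. -/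
def linRefinements {V : Type*} (R : V → V → Prop) : Set (V → V → Prop) :=
  {L | IsLinearRel L ∧ ∀ x y : V, L x y → R x y}

/-- The set `𝐋^⋄(Q)` of linear extensions of `Q`. -/
def linExtensions {V : Type*} (Q : V → V → Prop) : Set (V → V → Prop) :=
  {L | IsLinearRel L ∧ ∀ x y : V, Q x y → L x y}

/-- `θ` satisfies the Gomory–Hu condition: for pairwise distinct `x, y, z`,
`θ(x,z) ≥ min{θ(x,y), θ(y,z)}`. -/
def GomoryHu {V : Type*} (θ : V → V → ℝ) : Prop :=
  ∀ x y z : V, x ≠ y → y ≠ z → x ≠ z → min (θ x y) (θ y z) ≤ θ x z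

/-- The relation `R(θ)` induced by `θ`: `x ⪰ y` iff `x = y`, or `x ≠ y` and
`θ(x,y) ≥ θ(y,x)`. -/
def RelOf {V : Type*} (θ : V → V → ℝ) (x y : V) : Prop :=
  x = y ∨ (x ≠ y ∧ θ y x ≤ θ x y)

section

variable {V : Type*}

open Classical in
noncomputable def relIndicator (P : V → V → Prop) (x y : V) : ℝ :=
  if P x y then 1 else 0

theorem gomoryHu_relIndicator {P : V → V → Prop} (hP : Transitive P) :
    GomoryHu (relIndicator P) := by
  intro x y z _ _ _
  have hnonneg : 0 ≤ relIndicator P x z := by unfold relIndicator; split_ifs <;> norm_num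
  by_cases h : P x y ∧ P y z
  · simp [relIndicator, h.1, h.2, hP h.1 h.2]
  · rcases not_and_or.mp h with h | h
    · exact (min_le_left _ _).trans (by simpa [relIndicator, h] using hnonneg)
    · exact (min_le_right _ _).trans (by simpa [relIndicator, h] using hnonneg)

theorem relOf_relIndicator_strictPart_iff {R : V → V → Prop} (hR : CompleteRel R) (x y : V) :
    RelOf (relIndicator (StrictPart R)) x y ↔ R x y := by
  rcases eq_or_ne x y with rfl | hxy
  · simpa [RelOf] using hR x x
  · have hle : relIndicator (StrictPart R) y x ≤ relIndicator (StrictPart R) x y ↔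
        (R y x → R x y) := by
      by_cases hyx : R y x <;> by_cases hxy' : R x y <;> simp [relIndicator, StrictPart, *]
    simp only [RelOf, hxy, false_or, ne_eq, not_false_eq_true, true_and, hle]
    exact ⟨fun h => (hR x y).elim id h, fun h _ => h⟩

theorem completeRel_relOf (θ : V → V → ℝ) : CompleteRel (RelOf θ) := by
  intro x y
  rcases eq_or_ne x y with rfl | hxy
  · exact Or.inl (Or.inl rfl)
  · rcases le_total (θ y x) (θ x y) with h | h
    · exact Or.inl (Or.inr ⟨hxy, h⟩)
    · exact Or.inr (Or.inr ⟨hxy.symm, h⟩)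

theorem strictPart_relOf_iff (θ : V → V → ℝ) (x y : V) :
    StrictPart (RelOf θ) x y ↔ θ y x < θ x y := by
  rcases eq_or_ne x y with rfl | hxy
  · simp [StrictPart, RelOf]
  · simpa [StrictPart, RelOf, hxy, hxy.symm] using fun h : θ y x < θ x y => h.le

theorem GomoryHu.lt_of_lt_of_lt {θ : V → V → ℝ} (hθ : GomoryHu θ) {x y z : V}
    (hxy : θ y x < θ x y) (hyz : θ z y < θ y z) : θ z x < θ x z := by
  have hxy' : x ≠ y := by rintro rfl; exact hxy.false
  have hyz' : y ≠ z := by rintro rfl; exact hyz.false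
  have hxz' : x ≠ z := by rintro rfl; linarith
  by_contra! hzx
  have h₁ := hθ x y z hxy' hyz' hxz'
  have h₂ := hθ y z x hyz' hxz'.symm hxy'.symm
  have h₃ := hθ z x y hxz'.symm hxy' hyz'.symm
  rw [min_le_iff] at h₁ h₂ h₃
  rcases h₁ with h₁ | h₁ <;> rcases h₂ with h₂ | h₂ <;> rcases h₃ with h₃ | h₃ <;> linarith

theorem quasiTransitive_relOf {θ : V → V → ℝ} (hθ : GomoryHu θ) : QuasiTransitive (RelOf θ) := by
  intro x y z hxy hyz
  rw [strictPart_relOf_iff] at *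
  exact hθ.lt_of_lt_of_lt hxy hyz

end

theorem stmt6_general {V : Type*}
    (R : V → V → Prop) :
    (CompleteRel R ∧ QuasiTransitive R) ↔
      (∃ θ : V → V → ℝ, GomoryHu θ ∧ ∀ x y : V, R x y ↔ RelOf θ x y) := by
  constructor
  · rintro ⟨hc, hq⟩
    exact ⟨relIndicator (StrictPart R), gomoryHu_relIndicator hq,
      fun x y => (relOf_relIndicator_strictPart_iff hc x y).symm⟩
  · rintro ⟨θ, hθ, hR⟩
    obtain rfl : R = RelOf θ := funext₂ fun x y => propext (hR x y)
    exact ⟨completeRel_relOf θ, quasiTransitive_relOf hθ⟩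

/-- Characterization: `R` is complete and quasi-transitive iff `R = R(θ)` for
some `θ` satisfying the Gomory–Hu condition. -/
theorem stmt6 {V : Type*} [Fintype V] (hV : 2 ≤ Fintype.card V)
    (R : V → V → Prop) :
    (CompleteRel R ∧ QuasiTransitive R) ↔
      (∃ θ : V → V → ℝ, GomoryHu θ ∧ ∀ x y : V, R x y ↔ RelOf θ x y) :=
  stmt6_general R
end

section
/- Let V be a finite set of size n ≥ 2 and let R be a complete and quasi-transitive relation on V with R ≠ V². Then for every k ∈ {1,…,n−1}, C_k(R) is not contained in C_k(R^r); that is, there exists a k-maximum set W of R which is not a k-maximum set of the reversal R^r of R. -/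
/-- `C_k(R)`: the set of `k`-maximum sets of the relation `R`. -/
def kMaxSets {V : Type*} [Fintype V] [DecidableEq V]
    (R : V → V → Prop) (k : ℕ) : Set (Finset V) :=
  {W : Finset V | W.card = k ∧ ∀ x ∈ W, ∀ y ∉ W, R x y}

/-!
Call `W` dominant if `R x y` whenever `x ∈ W` and `y ∉ W`, so `C_k(R)` consists of the dominant
sets of size `k`. As the strict part `P` of `R` is a strict order, every nonempty finite set has
an element `m` with `R m y` for all `y` in the set; adding such an element of `X ∖ W` to a
dominant `W ⊆ X`, with `X` dominant, keeps `W` dominant. Hence between two dominant sets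
`U ⊆ X` there are dominant sets of every intermediate size.

Since `R ≠ V²` there are `b`, `a` with `P b a` such that `b` is a top element (`R b y` for all
`y`) and `a` a bottom element (`R x a` for all `x`). Then `{b} ⊆ V ∖ {a}` are dominant, and a
dominant `W` of size `k` between them is not dominant for `R^r`, as `b ∈ W`, `a ∉ W` and
`¬ R a b`. -/

section DominantSets

variable {V : Type*} {R : V → V → Prop}

def IsDominantSet (R : V → V → Prop) (W : Finset V) : Prop :=
  ∀ x ∈ W, ∀ y ∉ W, R x y

lemma CompleteRel.swap (hc : CompleteRel R) : CompleteRel (fun x y => R y x) :=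
  fun x y => hc y x

lemma QuasiTransitive.swap (hq : QuasiTransitive R) : QuasiTransitive (fun x y => R y x) :=
  fun _ _ _ hxy hyz => hq hyz hxy

lemma CompleteRel.strictPart_of_not (hc : CompleteRel R) {x y : V} (h : ¬ R x y) :
    StrictPart R y x :=
  ⟨(hc x y).resolve_left h, h⟩

lemma QuasiTransitive.exists_forall_rel [Finite V] (hc : CompleteRel R)
    (hq : QuasiTransitive R) {s : Finset V} (hs : s.Nonempty) :
    ∃ m ∈ s, ∀ y ∈ s, R m y := by
  have : IsTrans V (StrictPart R) := ⟨fun _ _ _ => @hq _ _ _⟩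
  have : Std.Irrefl (StrictPart R) := ⟨fun _ h => h.2 h.1⟩
  obtain ⟨m, hm, hmin⟩ :=
    (Finite.wellFounded_of_trans_of_irrefl (StrictPart R)).has_min (s : Set V) hs
  exact ⟨m, hm, fun y hy => by_contra fun h => hmin y hy (hc.strictPart_of_not h)⟩

lemma QuasiTransitive.exists_top_mem [Finite V] (hc : CompleteRel R) (hq : QuasiTransitive R)
    {s : Finset V} (hs : s.Nonempty) (hup : ∀ x ∈ s, ∀ y, StrictPart R y x → y ∈ s) :
    ∃ m ∈ s, ∀ y, R m y := by
  obtain ⟨m, hm, hmax⟩ := hq.exists_forall_rel hc hs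
  refine ⟨m, hm, fun y => ?_⟩
  by_contra h
  exact h (hmax y (hup m hm y (hc.strictPart_of_not h)))

lemma QuasiTransitive.exists_top_strictPart_bot [Finite V] (hc : CompleteRel R)
    (hq : QuasiTransitive R) (hne : ¬ ∀ x y : V, R x y) :
    ∃ b a, StrictPart R b a ∧ (∀ y, R b y) ∧ ∀ x, R x a := by
  classical
  have := Fintype.ofFinite V
  push Not at hne
  obtain ⟨a₀, b₀, hab₀⟩ := hne
  obtain ⟨b, hb, hbtop⟩ := hq.exists_top_mem hc (s := {x | StrictPart R x a₀})
    ⟨b₀, by simpa using hc.strictPart_of_not hab₀⟩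
    fun x hx y hyx => by
      simp only [Finset.mem_filter, Finset.mem_univ, true_and] at hx ⊢
      exact hq hyx hx
  obtain ⟨a, ha, habot⟩ := hq.swap.exists_top_mem hc.swap (s := {y | StrictPart R b y})
    ⟨a₀, by simpa using hb⟩
    fun x hx y hxy => by
      simp only [Finset.mem_filter, Finset.mem_univ, true_and] at hx ⊢
      exact hq hx hxy
  exact ⟨b, a, by simpa using ha, hbtop, habot⟩

lemma isDominantSet_singleton {b : V} (hb : ∀ y, R b y) : IsDominantSet R {b} := by
  intro x hx y _
  rw [Finset.mem_singleton.1 hx]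
  exact hb y

variable [DecidableEq V]

lemma isDominantSet_univ_erase [Fintype V] {a : V} (ha : ∀ x, R x a) :
    IsDominantSet R (Finset.univ.erase a) := by
  intro x _ y hy
  obtain rfl : y = a := by simpa using hy
  exact ha x

lemma IsDominantSet.insert {W : Finset V} (hW : IsDominantSet R W) {m : V}
    (hm : ∀ y ∉ W, R m y) : IsDominantSet R (insert m W) := by
  intro x hx y hy
  rw [Finset.mem_insert] at hx hy
  push Not at hy
  rcases hx with rfl | hx
  · exact hm y hy.2
  · exact hW x hx y hy.2

lemma QuasiTransitive.exists_isDominantSet_card_eq [Finite V] (hc : CompleteRel R)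
    (hq : QuasiTransitive R) {U X : Finset V} (hUX : U ⊆ X) (hU : IsDominantSet R U)
    (hX : IsDominantSet R X) {k : ℕ} (hUk : U.card ≤ k) (hkX : k ≤ X.card) :
    ∃ W, U ⊆ W ∧ W ⊆ X ∧ W.card = k ∧ IsDominantSet R W := by
  induction k, hUk using Nat.le_induction with
  | base => exact ⟨U, le_rfl, hUX, rfl, hU⟩
  | succ k _ ih =>
    obtain ⟨W, hUW, hWX, hWk, hW⟩ := ih (by omega)
    have hgap : (X \ W).Nonempty := by
      rw [← Finset.card_pos, Finset.card_sdiff_of_subset hWX]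
      omega
    obtain ⟨m, hm, hmax⟩ := hq.exists_forall_rel hc hgap
    rw [Finset.mem_sdiff] at hm
    refine ⟨insert m W, hUW.trans (Finset.subset_insert _ _), Finset.insert_subset hm.1 hWX,
      by rw [Finset.card_insert_of_notMem hm.2, hWk], hW.insert fun y hy => ?_⟩
    by_cases hyX : y ∈ X
    · exact hmax y (Finset.mem_sdiff.2 ⟨hyX, hy⟩)
    · exact hX m hm.1 y hyX

end DominantSets

theorem stmt19_general {V : Type*} [Fintype V] [DecidableEq V]
    (R : V → V → Prop) (hc : CompleteRel R) (hq : QuasiTransitive R)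
    (hne : ¬ ∀ x y : V, R x y)
    (k : ℕ) (hk1 : 1 ≤ k) (hk2 : k ≤ Fintype.card V - 1) :
    ¬ kMaxSets R k ⊆ kMaxSets (fun x y => R y x) k := by
  obtain ⟨b, a, hba, hbtop, habot⟩ := hq.exists_top_strictPart_bot hc hne
  have hba_ne : b ≠ a := fun h => hba.2 (h ▸ hba.1)
  obtain ⟨W, hbW, hWa, hWk, hW⟩ := hq.exists_isDominantSet_card_eq hc
    (Finset.singleton_subset_iff.2 (Finset.mem_erase.2 ⟨hba_ne, Finset.mem_univ b⟩))
    (isDominantSet_singleton hbtop) (isDominantSet_univ_erase habot)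
    (k := k) (by simpa using hk1) (by simpa [Finset.card_erase_of_mem] using hk2)
  intro hsub
  have haW : a ∉ W := fun h => (Finset.mem_erase.1 (hWa h)).1 rfl
  exact hba.2 ((hsub ⟨hWk, hW⟩).2 b (hbW (Finset.mem_singleton_self b)) a haW)

/-- For a complete and quasi-transitive relation `R ≠ V²` and every
`k ∈ {1,…,n−1}`, `C_k(R)` is not contained in `C_k(R^r)`. -/
theorem stmt19 {V : Type*} [Fintype V] [DecidableEq V]
    (hn : 2 ≤ Fintype.card V)
    (R : V → V → Prop) (hc : CompleteRel R) (hq : QuasiTransitive R)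
    (hne : ¬ ∀ x y : V, R x y)
    (k : ℕ) (hk1 : 1 ≤ k) (hk2 : k ≤ Fintype.card V - 1) :
    ¬ kMaxSets R k ⊆ kMaxSets (fun x y => R y x) k :=
  stmt19_general R hc hq hne k hk1 hk2
end
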